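/- Let Ω ⊂ ℝ^d be a bounded open set, let u ∈ L²(Ω;ℝ^d) be weakly incompressible with no-penetration, let f ∈ L²(Ω), and let T be a steady weak solution of the advection–diffusion equation with velocity u and source f. Let ξ: ℝ^d → ℝ be continuously differentiable with |ξ(x)| ≤ K for all x ∈ Ω, let w be a weak Neumann solution of Δw = u·∇ξ on Ω, and assume ∫_Ω |∇ξ|² dx + K² ∫_Ω |u|² dx > 0. Then ∫_Ω |∇T|² dx ≥ (∫_Ω f ξ dx)² / (∫_Ω |∇ξ|² dx + K² ∫_Ω |u|² dx). -/

import Mathlib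

/-!
Testing the equation with `ξ` gives `∫ f ξ = ∫ ∇T · (∇ξ + ξ u)`, so by Cauchy–Schwarz
`(∫ f ξ)² ≤ ∫ |∇T|² · ∫ |∇ξ + ξ u|²`. Expanding the last integral, the cross term
`2 ∫ ξ u · ∇ξ = ∫ u · ∇(ξ²)` vanishes by incompressibility, and `∫ ξ² |u|² ≤ K² ∫ |u|²`.
-/

open MeasureTheory RealInnerProductSpace

section L2

variable {α F : Type*} [MeasurableSpace α] {μ : Measure α}
  [NormedAddCommGroup F] [InnerProductSpace ℝ F]

theorem MeasureTheory.MemLp.integrable_inner {f g : α → F} (hf : MemLp f 2 μ)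
    (hg : MemLp g 2 μ) : Integrable (fun x => ⟪f x, g x⟫) μ :=
  (L2.integrable_inner (hf.toLp f) (hg.toLp g)).congr <| by
    filter_upwards [hf.coeFn_toLp, hg.coeFn_toLp] with x hfx hgx
    rw [hfx, hgx]

theorem MeasureTheory.MemLp.inner_toLp {f g : α → F} (hf : MemLp f 2 μ) (hg : MemLp g 2 μ) :
    ⟪hf.toLp f, hg.toLp g⟫ = ∫ x, ⟪f x, g x⟫ ∂μ := by
  rw [L2.inner_def]
  refine integral_congr_ae ?_
  filter_upwards [hf.coeFn_toLp, hg.coeFn_toLp] with x hfx hgx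
  rw [hfx, hgx]

theorem sq_integral_inner_le {f g : α → F} (hf : MemLp f 2 μ) (hg : MemLp g 2 μ) :
    (∫ x, ⟪f x, g x⟫ ∂μ) ^ 2 ≤ (∫ x, ‖f x‖ ^ 2 ∂μ) * ∫ x, ‖g x‖ ^ 2 ∂μ := by
  have h := real_inner_mul_inner_self_le (hf.toLp f) (hg.toLp g)
  rw [hf.inner_toLp hg, hf.inner_toLp hf, hg.inner_toLp hg] at h
  simpa only [real_inner_self_eq_norm_sq, sq] using h

theorem integral_inner_add_smul_eq_integral_mul {a b u : α → F} {f ξ : α → ℝ}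
    (ha : MemLp a 2 μ) (hb : MemLp b 2 μ) (hu : MemLp u 2 μ) (hf : Integrable f μ)
    (hξ : MemLp ξ ⊤ μ)
    (hweak : ∫ x, ⟪a x, b x⟫ ∂μ = ∫ x, (f x - ⟪u x, a x⟫) * ξ x ∂μ) :
    ∫ x, ⟪a x, b x + ξ x • u x⟫ ∂μ = ∫ x, f x * ξ x ∂μ := by
  have hξu : MemLp (fun x => ξ x • u x) 2 μ := hu.smul hξ
  have hrhs : Integrable (fun x => (f x - ⟪u x, a x⟫) * ξ x) μ :=
    (hf.sub (hu.integrable_inner ha)).mul_of_top_left hξ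
  calc ∫ x, ⟪a x, b x + ξ x • u x⟫ ∂μ
      = ∫ x, ⟪a x, b x⟫ ∂μ + ∫ x, ⟪a x, ξ x • u x⟫ ∂μ := by
        simp_rw [inner_add_right]
        exact integral_add (ha.integrable_inner hb) (ha.integrable_inner hξu)
    _ = ∫ x, ((f x - ⟪u x, a x⟫) * ξ x + ⟪a x, ξ x • u x⟫) ∂μ := by
        rw [hweak, integral_add hrhs (ha.integrable_inner hξu)]
    _ = ∫ x, f x * ξ x ∂μ := by
        congr 1 with x
        rw [real_inner_smul_right, real_inner_comm]
        ring

theorem integral_norm_add_smul_sq_le {g u : α → F} {ξ : α → ℝ} {K : ℝ}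
    (hg : MemLp g 2 μ) (hu : MemLp u 2 μ) (hξ : AEStronglyMeasurable ξ μ)
    (hξK : ∀ᵐ x ∂μ, |ξ x| ≤ K) (hcross : ∫ x, ξ x * ⟪u x, g x⟫ ∂μ = 0) :
    ∫ x, ‖g x + ξ x • u x‖ ^ 2 ∂μ ≤ (∫ x, ‖g x‖ ^ 2 ∂μ) + K ^ 2 * ∫ x, ‖u x‖ ^ 2 ∂μ := by
  have hξu : MemLp (fun x => ξ x • u x) 2 μ :=
    hu.smul (memLp_top_of_bound hξ K (by simpa only [Real.norm_eq_abs] using hξK))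
  have hg2 := hg.integrable_norm_pow two_ne_zero
  have hu2 := hu.integrable_norm_pow two_ne_zero
  have hξu2 := hξu.integrable_norm_pow two_ne_zero
  have hsum : Integrable (fun x => ‖g x‖ ^ 2 + ‖ξ x • u x‖ ^ 2) μ := hg2.add hξu2
  have hcross_int : Integrable (fun x => ξ x * ⟪u x, g x⟫) μ :=
    (hξu.integrable_inner hg).congr (ae_of_all _ fun x => real_inner_smul_left _ _ _)
  have hexpand (x : α) : ‖g x + ξ x • u x‖ ^ 2
      = ‖g x‖ ^ 2 + ‖ξ x • u x‖ ^ 2 + 2 * (ξ x * ⟪u x, g x⟫) := by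
    rw [norm_add_sq_real, real_inner_smul_right, real_inner_comm]
    ring
  have hbound : ∀ᵐ x ∂μ, ‖ξ x • u x‖ ^ 2 ≤ K ^ 2 * ‖u x‖ ^ 2 := by
    filter_upwards [hξK] with x hx
    rw [norm_smul, mul_pow, Real.norm_eq_abs]
    gcongr
  calc ∫ x, ‖g x + ξ x • u x‖ ^ 2 ∂μ = ∫ x, (‖g x‖ ^ 2 + ‖ξ x • u x‖ ^ 2) ∂μ := by
        simp_rw [hexpand]
        rw [integral_add hsum (hcross_int.const_mul 2), integral_const_mul, hcross,
          mul_zero, add_zero]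
    _ ≤ ∫ x, (‖g x‖ ^ 2 + K ^ 2 * ‖u x‖ ^ 2) ∂μ := by
        refine integral_mono_ae hsum (hg2.add (hu2.const_mul _)) ?_
        filter_upwards [hbound] with x hx
        linarith
    _ = (∫ x, ‖g x‖ ^ 2 ∂μ) + K ^ 2 * ∫ x, ‖u x‖ ^ 2 ∂μ := by
        rw [integral_add hg2 (hu2.const_mul _), integral_const_mul]

end L2

theorem ae_restrict_of_forall_mem_of_isClosed {X : Type*} [TopologicalSpace X]
    [MeasurableSpace X] [OpensMeasurableSpace X] {μ : Measure X} {s : Set X} {p : X → Prop}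
    (hp : IsClosed {x | p x}) (h : ∀ x ∈ s, p x) : ∀ᵐ x ∂μ.restrict s, p x :=
  ae_restrict_of_ae_restrict_of_subset h (ae_restrict_mem hp.measurableSet)

theorem Continuous.memLp_restrict_of_isBounded {X F : Type*} [PseudoMetricSpace X]
    [ProperSpace X] [MeasurableSpace X] [OpensMeasurableSpace X] [NormedAddCommGroup F]
    {μ : Measure X} [IsFiniteMeasureOnCompacts μ] {s : Set X} {g : X → F} (hg : Continuous g)
    (hs : Bornology.IsBounded s) (p : ENNReal) : MemLp g p (μ.restrict s) := by
  have : IsFiniteMeasure (μ.restrict s) := isFiniteMeasure_restrict.2 hs.measure_lt_top.ne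
  obtain ⟨C, hC⟩ := hs.isCompact_closure.exists_bound_of_continuousOn hg.continuousOn
  have hbound : ∀ᵐ x ∂μ.restrict s, ‖g x‖ ≤ C :=
    ae_restrict_of_forall_mem_of_isClosed (isClosed_le hg.norm continuous_const)
      fun x hx => hC x (subset_closure hx)
  exact (memLp_top_of_bound hg.aestronglyMeasurable C hbound).mono_exponent le_top

section Gradient

variable {E : Type*} [NormedAddCommGroup E] [InnerProductSpace ℝ E] [CompleteSpace E]

theorem ContDiff.continuous_gradient {g : E → ℝ} (hg : ContDiff ℝ 1 g) :
    Continuous (gradient g) :=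
  (InnerProductSpace.toDual ℝ E).symm.continuous.comp (hg.continuous_fderiv one_ne_zero)

theorem inner_gradient_mul_self {g : E → ℝ} {x : E} (hg : DifferentiableAt ℝ g x) (v : E) :
    ⟪v, gradient (fun y => g y * g y) x⟫ = 2 * g x * ⟪v, gradient g x⟫ := by
  simp only [inner_gradient_right, fderiv_fun_mul hg hg, conj_trivial, add_apply, smul_apply,
    smul_eq_mul]
  ring

theorem integral_mul_inner_gradient_self_eq_zero [MeasurableSpace E] {μ : Measure E}
    {u : E → E} {ξ : E → ℝ} (hξ : Differentiable ℝ ξ)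
    (hdiv : ∫ x, ⟪u x, gradient (fun y => ξ y * ξ y) x⟫ ∂μ = 0) :
    ∫ x, ξ x * ⟪u x, gradient ξ x⟫ ∂μ = 0 := by
  simp_rw [inner_gradient_mul_self (hξ _), mul_assoc, integral_const_mul] at hdiv
  simpa using hdiv

end Gradient

theorem dissipation_lower_bound_energy_general {d : ℕ}
    (Ω : Set (EuclideanSpace ℝ (Fin d)))
    (hΩb : Bornology.IsBounded Ω)
    (u : EuclideanSpace ℝ (Fin d) → EuclideanSpace ℝ (Fin d))
    (hu : MemLp u 2 (volume.restrict Ω))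
    (hdiv : ∀ ψ : EuclideanSpace ℝ (Fin d) → ℝ, ContDiff ℝ 1 ψ →
      ∫ x in Ω, (inner ℝ (u x) (gradient ψ x) : ℝ) = 0)
    (f : EuclideanSpace ℝ (Fin d) → ℝ)
    (hf : MemLp f 2 (volume.restrict Ω))
    (T : EuclideanSpace ℝ (Fin d) → ℝ) (hT : ContDiff ℝ 1 T)
    (hTweak : ∀ φ : EuclideanSpace ℝ (Fin d) → ℝ, ContDiff ℝ 1 φ →
      ∫ x in Ω, (inner ℝ (gradient T x) (gradient φ x) : ℝ)
        = ∫ x in Ω, (f x - (inner ℝ (u x) (gradient T x) : ℝ)) * φ x)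
    (ξ : EuclideanSpace ℝ (Fin d) → ℝ) (hξ : ContDiff ℝ 1 ξ)
    (K : ℝ) (hK : ∀ x ∈ Ω, |ξ x| ≤ K) :
    ∫ x in Ω, ‖gradient T x‖ ^ 2
      ≥ (∫ x in Ω, f x * ξ x) ^ 2
        / ((∫ x in Ω, ‖gradient ξ x‖ ^ 2) + K ^ 2 * ∫ x in Ω, ‖u x‖ ^ 2) := by
  have : IsFiniteMeasure (volume.restrict Ω) := isFiniteMeasure_restrict.2 hΩb.measure_lt_top.ne
  have hξK : ∀ᵐ x ∂volume.restrict Ω, |ξ x| ≤ K :=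
    ae_restrict_of_forall_mem_of_isClosed (isClosed_le hξ.continuous.abs continuous_const) hK
  have hξ_top := memLp_top_of_bound hξ.continuous.aestronglyMeasurable K
    (by simpa only [Real.norm_eq_abs] using hξK)
  have hgradT := hT.continuous_gradient.memLp_restrict_of_isBounded (μ := volume) hΩb 2
  have hgradξ := hξ.continuous_gradient.memLp_restrict_of_isBounded (μ := volume) hΩb 2
  have hflux := integral_inner_add_smul_eq_integral_mul hgradT hgradξ hu (hf.integrable one_le_two) hξ_top
    (hTweak ξ hξ)
  have henergy := integral_norm_add_smul_sq_le hgradξ hu hξ.continuous.aestronglyMeasurable hξK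
    (integral_mul_inner_gradient_self_eq_zero (hξ.differentiable one_ne_zero) (hdiv _ (hξ.mul hξ)))
  rw [ge_iff_le, ← hflux]
  refine div_le_of_le_mul₀ (by positivity) (integral_nonneg fun x => by positivity) ?_
  calc _ ≤ (∫ x in Ω, ‖gradient T x‖ ^ 2) * ∫ x in Ω, ‖gradient ξ x + ξ x • u x‖ ^ 2 :=
        sq_integral_inner_le hgradT (hgradξ.add (hu.smul hξ_top))
    _ ≤ _ := mul_le_mul_of_nonneg_left henergy (integral_nonneg fun x => by positivity)

/-- quantitative lower bound on the thermal dissipation in terms of a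
bounded test function `ξ` and the kinetic energy of the flow:
`∫|∇T|² ≥ (∫ fξ)² / (∫|∇ξ|² + K² ∫|u|²)`. -/
theorem dissipation_lower_bound_energy {d : ℕ}
    (Ω : Set (EuclideanSpace ℝ (Fin d)))
    (hΩo : IsOpen Ω) (hΩb : Bornology.IsBounded Ω) (hΩpos : 0 < volume Ω)
    (u : EuclideanSpace ℝ (Fin d) → EuclideanSpace ℝ (Fin d))
    (hu : MemLp u 2 (volume.restrict Ω))
    (hdiv : ∀ ψ : EuclideanSpace ℝ (Fin d) → ℝ, ContDiff ℝ 1 ψ →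
      ∫ x in Ω, (inner ℝ (u x) (gradient ψ x) : ℝ) = 0)
    (f : EuclideanSpace ℝ (Fin d) → ℝ)
    (hf : MemLp f 2 (volume.restrict Ω))
    (T : EuclideanSpace ℝ (Fin d) → ℝ) (hT : ContDiff ℝ 1 T)
    (hTweak : ∀ φ : EuclideanSpace ℝ (Fin d) → ℝ, ContDiff ℝ 1 φ →
      ∫ x in Ω, (inner ℝ (gradient T x) (gradient φ x) : ℝ)
        = ∫ x in Ω, (f x - (inner ℝ (u x) (gradient T x) : ℝ)) * φ x)
    (ξ : EuclideanSpace ℝ (Fin d) → ℝ) (hξ : ContDiff ℝ 1 ξ)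
    (K : ℝ) (hK : ∀ x ∈ Ω, |ξ x| ≤ K)
    (w : EuclideanSpace ℝ (Fin d) → ℝ) (hw : ContDiff ℝ 1 w)
    (hwweak : ∀ φ : EuclideanSpace ℝ (Fin d) → ℝ, ContDiff ℝ 1 φ →
      ∫ x in Ω, (inner ℝ (gradient w x) (gradient φ x) : ℝ)
        = - ∫ x in Ω, (inner ℝ (u x) (gradient ξ x) : ℝ) * φ x)
    (hpos : 0 < (∫ x in Ω, ‖gradient ξ x‖ ^ 2) + K ^ 2 * ∫ x in Ω, ‖u x‖ ^ 2) :
    ∫ x in Ω, ‖gradient T x‖ ^ 2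
      ≥ (∫ x in Ω, f x * ξ x) ^ 2
        / ((∫ x in Ω, ‖gradient ξ x‖ ^ 2) + K ^ 2 * ∫ x in Ω, ‖u x‖ ^ 2) :=
  dissipation_lower_bound_energy_general Ω hΩb u hu hdiv f hf T hT hTweak ξ hξ K hK
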